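/- arXiv:1911.02906 — 2 statements merged into one kernel-verified Lean document; each statement's English description precedes it below -/
import Mathlib

section
/- Let L ∈ ℝ with L ≤ 0 and let φ : [L, ∞) → ℝ be convex, continuously differentiable and satisfy φ(0) = 0. Then the following are equivalent: (i) φ(L) ≤ 0; (ii) for every q ≥ 0 and every p ∈ [L, ∞) there exists a global solution v : [0, ∞) → [L, ∞) of the generalized Riccati ODE v′(t) = q − φ(v(t)) with v(0) = p. -/
/-!
If `φ L > 0`, the solution with `q = 0` started at `L` has negative speed at time `0` and leaves
`[L, ∞)` at once. Conversely, if `φ L ≤ q` the field `q - φ` points inward at the boundary `L`,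
so solutions cannot drop below `L`; and by convexity `φ` lies above its tangent line at `L`, so
`q - φ` grows at most linearly and Grönwall's inequality rules out blow-up. Freezing `φ` outside a
large interval `[L, M]` gives a bounded, globally Lipschitz field, to which Picard–Lindelöf applies
on any `[0, T]`; the two bounds keep that solution inside `[L, M]`, where it solves the original
equation, and uniqueness glues these solutions into a global one.
-/

open Real Set Filter Topology

theorem le_image_of_deriv_right_nonneg_of_lt {f f' : ℝ → ℝ} {a b c : ℝ}
    (hf : ContinuousOn f (Icc a b)) (hf' : ∀ x ∈ Ico a b, HasDerivWithinAt f (f' x) (Ici x) x)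
    (ha : c ≤ f a) (hnonneg : ∀ x ∈ Ico a b, f x < c → 0 ≤ f' x) :
    ∀ ⦃x⦄, x ∈ Icc a b → c ≤ f x := by
  intro x hx
  -- the slack `ε` makes the fencing inequality strict where `c - f` touches the barrier
  have hbound : ∀ ε > 0, c - f x ≤ ε * (1 + (x - a)) := fun ε hε =>
    image_le_of_deriv_right_lt_deriv_boundary' (f := fun y => c - f y) (f' := fun y => -f' y)
      (B := fun y => ε * (1 + (y - a))) (B' := fun _ => ε)
      (continuousOn_const.sub hf) (fun y hy => (hf' y hy).const_sub c) (by simp; linarith)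
      (by fun_prop)
      (fun y _ => by simpa using ((hasDerivWithinAt_id y _).sub_const a).const_add 1 |>.const_mul ε)
      (fun y hy heq => by
        have hlt : f y < c := by nlinarith [hy.1]
        linarith [hnonneg y hy hlt]) hx
  by_contra! hlt
  have hpos : 0 < 1 + (x - a) := by linarith [hx.1]
  have := hbound ((c - f x) / (2 * (1 + (x - a)))) (by positivity)
  rw [div_mul_eq_mul_div, mul_comm 2, ← div_div, mul_div_cancel_right₀ _ hpos.ne'] at this
  linarith

theorem ConvexOn.add_mul_sub_le_of_hasDerivWithinAt {S : Set ℝ} {f : ℝ → ℝ} {f' x y : ℝ}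
    (hfc : ConvexOn ℝ S f) (hx : x ∈ S) (hy : y ∈ S) (hxy : x ≤ y)
    (hf' : HasDerivWithinAt f f' S x) : f x + f' * (y - x) ≤ f y := by
  rcases hxy.eq_or_lt with rfl | hlt
  · simp
  have := hfc.le_slope_of_hasDerivWithinAt hx hy hlt hf'
  rw [slope_def_field, le_div_iff₀ (sub_pos.2 hlt)] at this
  linarith

theorem ConvexOn.sub_mul_le_of_hasDerivWithinAt {L d x y : ℝ} {f : ℝ → ℝ}
    (hfc : ConvexOn ℝ (Ici L) f) (hf' : HasDerivWithinAt f d (Ici L) L) (hLy : L ≤ y)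
    (hyx : y ≤ x) : f L - max (-d) 0 * (x - L) ≤ f y :=
  calc f L - max (-d) 0 * (x - L) ≤ f L - max (-d) 0 * (y - L) := by gcongr
    _ ≤ f L + d * (y - L) := by
        nlinarith [mul_nonneg (neg_le_iff_add_nonneg.1 (le_max_left (-d) 0)) (sub_nonneg.2 hLy)]
    _ ≤ f y := hfc.add_mul_sub_le_of_hasDerivWithinAt self_mem_Ici hLy hLy hf'

theorem IsMinOn.nonneg_of_hasDerivWithinAt_Ici {f : ℝ → ℝ} {f' a : ℝ}
    (hmin : IsMinOn f (Ici a) a) (hf : HasDerivWithinAt f f' (Ici a) a) : 0 ≤ f' := by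
  have h1 : (1 : ℝ) ∈ posTangentConeAt (Ici a) a :=
    mem_posTangentConeAt_of_segment_subset (by
      rw [segment_eq_Icc (by linarith)]; exact Icc_subset_Ici_self)
  simpa using hmin.localize.hasFDerivWithinAt_nonneg hf.hasFDerivWithinAt h1

theorem exists_forall_mem_Icc_hasDerivWithinAt_of_lipschitzWith {E : Type*}
    [NormedAddCommGroup E] [NormedSpace ℝ E] [CompleteSpace E] {F : E → E} {K : NNReal} {C : ℝ}
    (hF : LipschitzWith K F) (hC : ∀ x, ‖F x‖ ≤ C) (x₀ : E) {T : ℝ} (hT : 0 ≤ T) :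
    ∃ u : ℝ → E, u 0 = x₀ ∧ ∀ t ∈ Icc 0 T, HasDerivWithinAt u (F (u t)) (Icc 0 T) t := by
  have hPL : IsPicardLindelof (fun _ => F) (tmin := 0) (tmax := T) ⟨0, left_mem_Icc.2 hT⟩ x₀
      (C.toNNReal * T.toNNReal) 0 C.toNNReal K :=
    .of_time_independent (fun x _ => (hC x).trans (le_coe_toNNReal C)) hF.lipschitzOnWith
      (by simp [hT])
  exact hPL.exists_eq_forall_mem_Icc_hasDerivWithinAt₀

theorem exists_forall_mem_Icc_hasDerivWithinAt_comp_projIcc {L M : ℝ} (hLM : L ≤ M) {g : ℝ → ℝ}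
    (hg : ContDiffOn ℝ 1 g (Icc L M)) (p : ℝ) {T : ℝ} (hT : 0 ≤ T) :
    ∃ u : ℝ → ℝ, u 0 = p ∧
      ∀ t ∈ Icc 0 T, HasDerivWithinAt u (g (projIcc L M hLM (u t))) (Icc 0 T) t := by
  obtain ⟨K, hK⟩ := hg.exists_lipschitzOnWith one_ne_zero (convex_Icc L M) isCompact_Icc
  obtain ⟨C, hC⟩ := isCompact_Icc.exists_bound_of_continuousOn hg.continuousOn
  have hKg := hK.to_restrict.comp (LipschitzWith.projIcc hLM)
  rw [mul_one] at hKg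
  exact exists_forall_mem_Icc_hasDerivWithinAt_of_lipschitzWith hKg
    (fun x => hC _ (projIcc L M hLM x).2) p hT

section Autonomous

variable {E : Type*} [NormedAddCommGroup E] [NormedSpace ℝ E]

def IsSolutionOn (g : E → E) (s : Set E) (a b : ℝ) (u : ℝ → E) : Prop :=
  ∀ t ∈ Icc a b, u t ∈ s ∧ HasDerivWithinAt u (g (u t)) (Icc a b) t

variable {g : E → E} {s : Set E} {a b : ℝ} {u w : ℝ → E}

theorem IsSolutionOn.mono_right {c : ℝ} (hu : IsSolutionOn g s a b u) (hcb : c ≤ b) :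
    IsSolutionOn g s a c u := fun t ht =>
  let h := hu t ⟨ht.1, ht.2.trans hcb⟩
  ⟨h.1, h.2.mono (Icc_subset_Icc_right hcb)⟩

theorem IsSolutionOn.continuousOn (hu : IsSolutionOn g s a b u) : ContinuousOn u (Icc a b) :=
  fun t ht => (hu t ht).2.continuousWithinAt

theorem IsSolutionOn.hasDerivWithinAt_Ici {t : ℝ} (hu : IsSolutionOn g s a b u)
    (ht : t ∈ Ico a b) : HasDerivWithinAt u (g (u t)) (Ici t) t :=
  (hu t (Ico_subset_Icc_self ht)).2.mono_of_mem_nhdsWithin (Icc_mem_nhdsGE_of_mem ht)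

theorem IsSolutionOn.eqOn (hg : LocallyLipschitzOn s g) (hu : IsSolutionOn g s a b u)
    (hw : IsSolutionOn g s a b w) (ha : u a = w a) : EqOn u w (Icc a b) := by
  set k := u '' Icc a b ∪ w '' Icc a b
  have hk : IsCompact k :=
    (isCompact_Icc.image_of_continuousOn hu.continuousOn).union
      (isCompact_Icc.image_of_continuousOn hw.continuousOn)
  have hks : k ⊆ s := union_subset (image_subset_iff.2 fun t ht => (hu t ht).1)
    (image_subset_iff.2 fun t ht => (hw t ht).1)
  obtain ⟨K, hK⟩ := (hg.mono hks).exists_lipschitzOnWith_of_compact hk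
  exact ODE_solution_unique_of_mem_Icc_right (v := fun _ => g) (s := fun _ => k)
    (fun _ _ => hK) hu.continuousOn (fun t ht => hu.hasDerivWithinAt_Ici ht)
    (fun t ht => .inl ⟨t, Ico_subset_Icc_self ht, rfl⟩) hw.continuousOn
    (fun t ht => hw.hasDerivWithinAt_Ici ht) (fun t ht => .inr ⟨t, Ico_subset_Icc_self ht, rfl⟩) ha

theorem exists_forall_hasDerivWithinAt_Ici_of_forall_isSolutionOn (hg : LocallyLipschitzOn s g)
    {x₀ : E} (hex : ∀ n : ℕ, ∃ u : ℝ → E, u 0 = x₀ ∧ IsSolutionOn g s 0 n u) :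
    ∃ v : ℝ → E, v 0 = x₀ ∧ ∀ t, 0 ≤ t → v t ∈ s ∧ HasDerivWithinAt v (g (v t)) (Ici 0) t := by
  choose u hu0 hu using hex
  set v : ℝ → E := fun t => u (⌊t⌋₊ + 1) t
  have hagree : ∀ (n : ℕ) (t : ℝ), t ∈ Icc 0 (n : ℝ) → v t = u n t := fun n t ht =>
    IsSolutionOn.eqOn hg ((hu _).mono_right (by push_cast; exact (Nat.lt_floor_add_one t).le))
      ((hu n).mono_right ht.2) (by rw [hu0, hu0]) (right_mem_Icc.2 ht.1)
  refine ⟨v, by simpa [v] using hu0 1, fun t ht => ?_⟩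
  set N := ⌊t⌋₊ + 1
  have htN : t < N := by push_cast [N]; exact Nat.lt_floor_add_one t
  have hvt : v t = u N t := rfl
  have hnhds : Icc 0 (N : ℝ) ∈ 𝓝[Ici 0] t := by
    rw [← Ici_inter_Iic]; exact inter_mem_nhdsWithin _ (Iic_mem_nhds htN)
  obtain ⟨hmem, hderiv⟩ := hu N t ⟨ht, htN.le⟩
  refine ⟨hvt ▸ hmem, hvt ▸ ?_⟩
  exact (hderiv.mono_of_mem_nhdsWithin hnhds).congr_of_eventuallyEq
    (eventually_of_mem hnhds fun r hr => hagree N r hr) hvt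

end Autonomous

theorem exists_isSolutionOn_riccati {L q p T : ℝ} {φ : ℝ → ℝ} (hconv : ConvexOn ℝ (Ici L) φ)
    (hC1 : ContDiffOn ℝ 1 φ (Ici L)) (hq : φ L ≤ q) (hp : L ≤ p) (hT : 0 ≤ T) :
    ∃ v : ℝ → ℝ, v 0 = p ∧ IsSolutionOn (fun x => q - φ x) (Ici L) 0 T v := by
  set d := derivWithin φ (Ici L) L
  have hd : HasDerivWithinAt φ d (Ici L) L :=
    (hC1.differentiableOn one_ne_zero L self_mem_Ici).hasDerivWithinAt
  set k := max (-d) 0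
  -- Grönwall bound at time `T` for `u - L`, whose derivative is at most `k (u - L) + (q - φ L)`.
  set M := L + gronwallBound (p - L) k (q - φ L) T
  have hgron_mono := gronwallBound_mono (sub_nonneg.2 hp) (sub_nonneg.2 hq) (le_max_right (-d) 0)
  have hpM : p ≤ M := by
    have := hgron_mono hT
    rw [gronwallBound_x0] at this
    linarith
  have hLM : L ≤ M := hp.trans hpM
  obtain ⟨u, hu0, hu⟩ := exists_forall_mem_Icc_hasDerivWithinAt_comp_projIcc hLM
    (contDiffOn_const.sub (hC1.mono Icc_subset_Ici_self)) p hT (g := fun x => q - φ x)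
  set c : ℝ → ℝ := fun x => projIcc L M hLM x
  have hu_cont : ContinuousOn u (Icc 0 T) := fun t ht => (hu t ht).continuousWithinAt
  have hu' : ∀ t ∈ Ico 0 T, HasDerivWithinAt u (q - φ (c (u t))) (Ici t) t := fun t ht =>
    (hu t (Ico_subset_Icc_self ht)).mono_of_mem_nhdsWithin (Icc_mem_nhdsGE_of_mem ht)
  have hlow : ∀ t ∈ Icc 0 T, L ≤ u t :=
    le_image_of_deriv_right_nonneg_of_lt hu_cont hu' (hu0 ▸ hp) fun t _ hlt => by
      rw [show c (u t) = L by simp [c, projIcc_of_le_left hLM hlt.le]]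
      linarith
  have hgron : ∀ t ∈ Icc 0 T, u t - L ≤ gronwallBound (p - L) k (q - φ L) (t - 0) :=
    le_gronwallBound_of_liminf_deriv_right_le (hu_cont.sub continuousOn_const)
      (fun t ht r hr => by
        simpa [slope_def_module] using ((hu' t ht).sub_const L).liminf_right_slope_le hr)
      (by rw [hu0]) fun t ht => by
        have hcL := (projIcc L M hLM (u t)).2.1
        have hcu : c (u t) ≤ u t := by
          simpa [c, coe_projIcc] using hlow t (Ico_subset_Icc_self ht)
        linarith [hconv.sub_mul_le_of_hasDerivWithinAt hd hcL hcu]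
  have hup : ∀ t ∈ Icc 0 T, u t ≤ M := fun t ht => by
    have := (hgron t ht).trans (hgron_mono (by simpa using ht.2))
    linarith
  refine ⟨u, hu0, fun t ht => ⟨hlow t ht, ?_⟩⟩
  simpa [c, projIcc_of_mem hLM ⟨hlow t ht, hup t ht⟩] using hu t ht

theorem stmt_8_general (L : ℝ) (φ : ℝ → ℝ)
    (hconv : ConvexOn ℝ (Set.Ici L) φ)
    (hC1 : ContDiffOn ℝ 1 φ (Set.Ici L)) :
    φ L ≤ 0 ↔
      ∀ q : ℝ, 0 ≤ q → ∀ p : ℝ, L ≤ p →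
        ∃ v : ℝ → ℝ,
          (∀ t : ℝ, 0 ≤ t → L ≤ v t) ∧ v 0 = p ∧
          (∀ t : ℝ, 0 ≤ t → HasDerivWithinAt v (q - φ (v t)) (Set.Ici 0) t) := by
  constructor
  · intro hφL q hq p hp
    obtain ⟨v, hv0, hv⟩ := exists_forall_hasDerivWithinAt_Ici_of_forall_isSolutionOn
      ((contDiffOn_const.sub hC1).locallyLipschitzOn (convex_Ici L))
      fun n => exists_isSolutionOn_riccati hconv hC1 (hφL.trans hq) hp n.cast_nonneg
    exact ⟨v, fun t ht => (hv t ht).1, hv0, fun t ht => (hv t ht).2⟩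
  · intro hsol
    obtain ⟨v, hvL, hv0, hv⟩ := hsol 0 le_rfl L le_rfl
    have hmin : IsMinOn v (Ici 0) 0 := fun t ht => hv0 ▸ hvL t ht
    have := hmin.nonneg_of_hasDerivWithinAt_Ici (hv 0 le_rfl)
    rw [hv0] at this
    linarith

/-- Characterization of global solvability of the generalized Riccati ODE: φ(L) ≤ 0. -/
theorem stmt_8 (L : ℝ) (hL : L ≤ 0) (φ : ℝ → ℝ)
    (hconv : ConvexOn ℝ (Set.Ici L) φ)
    (hC1 : ContDiffOn ℝ 1 φ (Set.Ici L))
    (hφ0 : φ 0 = 0) :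
    φ L ≤ 0 ↔
      ∀ q : ℝ, 0 ≤ q → ∀ p : ℝ, L ≤ p →
        ∃ v : ℝ → ℝ,
          (∀ t : ℝ, 0 ≤ t → L ≤ v t) ∧ v 0 = p ∧
          (∀ t : ℝ, 0 ≤ t → HasDerivWithinAt v (q - φ (v t)) (Set.Ici 0) t) :=
  stmt_8_general L φ hconv hC1
end

section
/- Let p > 0 and let φ : [0, p] → ℝ be locally Lipschitz with φ(0) = 0, φ(z) > 0 for all z ∈ (0, p], and such that φ(z)/z → b as z → 0⁺ for some b > 0. Then there is a unique global solution v : [0, ∞) → (0, p] of v′(t) = −φ(v(t)) with v(0) = p; v is strictly decreasing, v(t) → 0 as t → ∞, the integral ∫₀^p z/φ(z) dz is finite, and ∫₀^∞ v(s) ds = ∫₀^p z/φ(z) dz. -/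
/-!
The solution is the inverse of the travel time `F z = ∫ u in z..p, (φ u)⁻¹`. Since
`φ u ≤ C u` near `0`, `F` dominates `C⁻¹ log (1 / z)` and so decreases strictly from `+∞`
at `0⁺` to `F p = 0`; thus `v = F⁻¹ : [0, ∞) → (0, p]` exists, and it solves the equation
because `F' = -1 / φ`. Conversely, `(F ∘ w)' = 1` for every solution `w`, so `F (w t) = t`
and `w = v`. Finally, the change of variables `t = F z`, with Jacobian `1 / φ z`, turns
`∫ t in Ici 0, v t` into `∫ z in Ioc 0 p, z / φ z`, which converges because
`z / φ z → 1 / b`.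
-/

open Real Set Filter MeasureTheory

open Topology intervalIntegral

theorem HasDerivWithinAt.of_local_left_inverse {𝕜 : Type*} [NontriviallyNormedField 𝕜]
    {f g : 𝕜 → 𝕜} {f' a : 𝕜} {s t : Set 𝕜} (hg : Tendsto g (𝓝[s] a) (𝓝[t] (g a)))
    (hf : HasDerivWithinAt f f' t (g a)) (hf' : f' ≠ 0) (ha : a ∈ s)
    (hfg : ∀ᶠ x in 𝓝[s] a, f (g x) = x) : HasDerivWithinAt g f'⁻¹ s a :=
  HasFDerivWithinAt.of_local_left_inverse
    (f' := ContinuousLinearEquiv.unitsEquivAut 𝕜 (Units.mk0 f' hf')) hg hf ha hfg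

theorem integrableOn_Ioc_of_continuousOn_of_tendsto {E : Type*} [NormedAddCommGroup E]
    {g : ℝ → E} {a b : ℝ} {c : E} (hg : ContinuousOn g (Ioc a b))
    (hlim : Tendsto g (𝓝[>] a) (𝓝 c)) : IntegrableOn g (Ioc a b) := by
  classical
  have hcont : ContinuousOn (Function.update g a c) (Icc a b) := by
    rw [continuousOn_update_iff, Icc_sdiff_left]
    exact ⟨hg, fun _ => hlim.mono_left (nhdsWithin_mono _ Ioc_subset_Ioi_self)⟩
  refine (hcont.integrableOn_Icc.mono_set Ioc_subset_Icc_self).congr_fun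
    (fun x hx => ?_) measurableSet_Ioc
  exact Function.update_of_ne hx.1.ne' _ _

noncomputable def travelTime (φ : ℝ → ℝ) (p z : ℝ) : ℝ := ∫ u in z..p, (φ u)⁻¹

section travelTime

variable {φ : ℝ → ℝ} {p : ℝ}

theorem travelTime_self : travelTime φ p p = 0 := integral_same

theorem intervalIntegrable_inv_of_uIcc_subset (hφ : ContinuousOn φ (Ioc 0 p))
    (hpos : ∀ z ∈ Ioc 0 p, 0 < φ z) {a b : ℝ} (hab : uIcc a b ⊆ Ioc 0 p) :
    IntervalIntegrable (fun u => (φ u)⁻¹) volume a b :=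
  ((hφ.mono hab).inv₀ fun z hz => (hpos z (hab hz)).ne').intervalIntegrable

theorem integral_inv_add_travelTime (hφ : ContinuousOn φ (Ioc 0 p))
    (hpos : ∀ z ∈ Ioc 0 p, 0 < φ z) {z₁ z₂ : ℝ} (hz₁ : 0 < z₁) (h : z₁ ≤ z₂) (hz₂ : z₂ ≤ p) :
    (∫ u in z₁..z₂, (φ u)⁻¹) + travelTime φ p z₂ = travelTime φ p z₁ :=
  integral_add_adjacent_intervals
    (intervalIntegrable_inv_of_uIcc_subset hφ hpos (by
      rw [uIcc_of_le h]; exact Icc_subset_Ioc hz₁ hz₂))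
    (intervalIntegrable_inv_of_uIcc_subset hφ hpos (by
      rw [uIcc_of_le hz₂]; exact Icc_subset_Ioc (hz₁.trans_le h) le_rfl))

theorem hasDerivWithinAt_travelTime (hφ : ContinuousOn φ (Ioc 0 p))
    (hpos : ∀ z ∈ Ioc 0 p, 0 < φ z) {z : ℝ} (hz : z ∈ Ioc 0 p) :
    HasDerivWithinAt (travelTime φ p) (-(φ z)⁻¹) (Ioc 0 p) z := by
  have hinv : ContinuousOn (fun u => (φ u)⁻¹) (Ioc 0 p) := hφ.inv₀ fun u hu => (hpos u hu).ne'
  have hint : IntervalIntegrable (fun u => (φ u)⁻¹) volume z p :=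
    intervalIntegrable_inv_of_uIcc_subset hφ hpos (by
      rw [uIcc_of_le hz.2]; exact Icc_subset_Ioc hz.1 le_rfl)
  rcases hz.2.lt_or_eq with hzp | rfl
  · exact (integral_hasDerivAt_left hint
      ((hinv.mono Ioo_subset_Ioc_self).stronglyMeasurableAtFilter isOpen_Ioo z ⟨hz.1, hzp⟩)
      (hinv.continuousAt (Ioc_mem_nhds hz.1 hzp))).hasDerivWithinAt
  · have hnhds : 𝓝[Ioc 0 z] z = 𝓝[≤] z := nhdsWithin_Ioc_eq_nhdsLE hz.1
    refine (integral_hasDerivWithinAt_left hint (s := Iic z) (t := Iic z) ?_ ?_).mono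
      Ioc_subset_Iic_self
    · rw [← hnhds]; exact hinv.stronglyMeasurableAtFilter_nhdsWithin measurableSet_Ioc z
    · rw [ContinuousWithinAt, ← hnhds]; exact hinv z hz

theorem strictAntiOn_travelTime (hφ : ContinuousOn φ (Ioc 0 p))
    (hpos : ∀ z ∈ Ioc 0 p, 0 < φ z) : StrictAntiOn (travelTime φ p) (Ioc 0 p) := by
  have hderiv := fun z (hz : z ∈ Ioc 0 p) => hasDerivWithinAt_travelTime hφ hpos hz
  refine strictAntiOn_of_deriv_neg (convex_Ioc 0 p)
    (fun z hz => (hderiv z hz).continuousWithinAt) fun z hz => ?_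
  rw [interior_Ioc] at hz
  rw [((hderiv z (Ioo_subset_Ioc_self hz)).hasDerivAt (Ioc_mem_nhds hz.1 hz.2)).deriv]
  exact neg_neg_of_pos (inv_pos.2 (hpos z (Ioo_subset_Ioc_self hz)))

theorem sub_le_mul_travelTime_sub (hφ : ContinuousOn φ (Ioc 0 p))
    (hpos : ∀ z ∈ Ioc 0 p, 0 < φ z) {M z₁ z₂ : ℝ} (hM : ∀ z ∈ Ioc 0 p, φ z ≤ M)
    (hz₁ : 0 < z₁) (h : z₁ ≤ z₂) (hz₂ : z₂ ≤ p) :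
    z₂ - z₁ ≤ M * (travelTime φ p z₁ - travelTime φ p z₂) := by
  have hsub : Icc z₁ z₂ ⊆ Ioc 0 p := Icc_subset_Ioc hz₁ hz₂
  have hM₀ : 0 < M := (hpos z₂ ⟨hz₁.trans_le h, hz₂⟩).trans_le (hM z₂ ⟨hz₁.trans_le h, hz₂⟩)
  rw [← div_le_iff₀' hM₀, ← integral_inv_add_travelTime hφ hpos hz₁ h hz₂, add_sub_cancel_right]
  calc (z₂ - z₁) / M = ∫ _ in z₁..z₂, M⁻¹ := by simp [div_eq_mul_inv]
    _ ≤ ∫ u in z₁..z₂, (φ u)⁻¹ :=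
      integral_mono_on h intervalIntegrable_const
        (intervalIntegrable_inv_of_uIcc_subset hφ hpos (by rwa [uIcc_of_le h]))
        fun u hu => inv_anti₀ (hpos u (hsub hu)) (hM u (hsub hu))

theorem add_inv_mul_log_le_travelTime (hφ : ContinuousOn φ (Ioc 0 p))
    (hpos : ∀ z ∈ Ioc 0 p, 0 < φ z) {C δ z : ℝ} (hC : 0 < C) (hδp : δ ≤ p)
    (hbound : ∀ u ∈ Ioc 0 δ, φ u ≤ C * u) (hz : z ∈ Ioc 0 δ) :
    travelTime φ p δ + C⁻¹ * log (δ / z) ≤ travelTime φ p z := by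
  have hsub : uIcc z δ ⊆ Ioc 0 p := by
    rw [uIcc_of_le hz.2]; exact Icc_subset_Ioc hz.1 hδp
  rw [← integral_inv_add_travelTime hφ hpos hz.1 hz.2 hδp, add_comm]
  gcongr
  calc C⁻¹ * log (δ / z) = ∫ u in z..δ, (C * u)⁻¹ := by
        simp only [mul_inv, intervalIntegral.integral_const_mul,
          integral_inv_of_pos hz.1 (hz.1.trans_le hz.2)]
    _ ≤ ∫ u in z..δ, (φ u)⁻¹ := by
      refine integral_mono_on hz.2 (ContinuousOn.intervalIntegrable ?_)
        (intervalIntegrable_inv_of_uIcc_subset hφ hpos hsub) fun u hu => ?_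
      · exact (continuousOn_const.mul continuousOn_id).inv₀ fun u hu =>
          (mul_pos hC (hsub hu).1).ne'
      · have hu₀ : 0 < u := hz.1.trans_le hu.1
        exact inv_anti₀ (hpos u ⟨hu₀, hu.2.trans hδp⟩) (hbound u ⟨hu₀, hu.2⟩)

theorem tendsto_travelTime_nhdsGT_zero (hφ : ContinuousOn φ (Ioc 0 p))
    (hpos : ∀ z ∈ Ioc 0 p, 0 < φ z) (hp : 0 < p) {b : ℝ}
    (hlim : Tendsto (fun z => φ z / z) (𝓝[>] 0) (𝓝 b)) :
    Tendsto (travelTime φ p) (𝓝[>] 0) atTop := by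
  set C := max (b + 1) 1
  have hC : 0 < C := zero_lt_one.trans_le (le_max_right _ _)
  obtain ⟨δ, hδ, hδp, hbound⟩ : ∃ δ > 0, δ ≤ p ∧ ∀ u ∈ Ioc 0 δ, φ u ≤ C * u := by
    obtain ⟨δ', hδ', hsub⟩ := mem_nhdsGT_iff_exists_Ioc_subset.1
      (hlim.eventually (gt_mem_nhds (lt_add_one b)))
    refine ⟨min δ' p, lt_min hδ' hp, min_le_right _ _, fun u hu => ?_⟩
    have hu' : φ u / u < b + 1 := hsub ⟨hu.1, hu.2.trans (min_le_left _ _)⟩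
    rw [div_lt_iff₀ hu.1] at hu'
    nlinarith [le_max_left (b + 1) 1, hu.1]
  have hlog : Tendsto (fun z => travelTime φ p δ + C⁻¹ * log (δ / z)) (𝓝[>] 0) atTop :=
    tendsto_atTop_add_const_left _ _ <| Tendsto.const_mul_atTop (inv_pos.2 hC) <|
      tendsto_log_atTop.comp <| (tendsto_inv_nhdsGT_zero.const_mul_atTop hδ).congr fun z => by
        simp [div_eq_mul_inv]
  refine tendsto_atTop_mono' _ (mem_of_superset (Ioo_mem_nhdsGT hδ) fun z hz => ?_) hlog
  exact add_inv_mul_log_le_travelTime hφ hpos hC hδp hbound (Ioo_subset_Ioc_self hz)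

theorem bijOn_travelTime (hφ : ContinuousOn φ (Ioc 0 p)) (hpos : ∀ z ∈ Ioc 0 p, 0 < φ z)
    (hp : 0 < p) {b : ℝ} (hlim : Tendsto (fun z => φ z / z) (𝓝[>] 0) (𝓝 b)) :
    BijOn (travelTime φ p) (Ioc 0 p) (Ici 0) := by
  have hanti := strictAntiOn_travelTime hφ hpos
  refine ⟨fun z hz => ?_, hanti.injOn, fun t (ht : 0 ≤ t) => ?_⟩
  · have := hanti.antitoneOn hz ⟨hp, le_rfl⟩ hz.2
    rwa [travelTime_self] at this
  · obtain ⟨z₀, hz₀t, hz₀⟩ :=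
      ((tendsto_travelTime_nhdsGT_zero hφ hpos hp hlim).eventually_ge_atTop t
        |>.and (Ioo_mem_nhdsGT hp)).exists
    have hsub : Icc z₀ p ⊆ Ioc 0 p := Icc_subset_Ioc hz₀.1 le_rfl
    have hcont : ContinuousOn (travelTime φ p) (Icc z₀ p) := fun z hz =>
      (hasDerivWithinAt_travelTime hφ hpos (hsub hz)).continuousWithinAt.mono hsub
    obtain ⟨z, hz, rfl⟩ := intermediate_value_Icc' hz₀.2.le hcont
      ⟨travelTime_self (φ := φ) ▸ ht, hz₀t⟩
    exact ⟨z, hsub hz, rfl⟩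

end travelTime

def IsDecaySolution (φ : ℝ → ℝ) (p : ℝ) (w : ℝ → ℝ) : Prop :=
  (∀ t : ℝ, 0 ≤ t → w t ∈ Ioc 0 p) ∧ w 0 = p ∧
    ∀ t : ℝ, 0 ≤ t → HasDerivWithinAt w (-(φ (w t))) (Ici 0) t

noncomputable def decaySolution (φ : ℝ → ℝ) (p : ℝ) : ℝ → ℝ :=
  Function.invFunOn (travelTime φ p) (Ioc 0 p)

section decaySolution

variable {φ : ℝ → ℝ} {p : ℝ}

theorem mapsTo_decaySolution (hbij : BijOn (travelTime φ p) (Ioc 0 p) (Ici 0)) :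
    MapsTo (decaySolution φ p) (Ici 0) (Ioc 0 p) :=
  hbij.surjOn.mapsTo_invFunOn

theorem invOn_decaySolution (hbij : BijOn (travelTime φ p) (Ioc 0 p) (Ici 0)) :
    InvOn (decaySolution φ p) (travelTime φ p) (Ioc 0 p) (Ici 0) :=
  hbij.invOn_invFunOn

theorem IsDecaySolution.travelTime_eq (hφ : ContinuousOn φ (Ioc 0 p))
    (hpos : ∀ z ∈ Ioc 0 p, 0 < φ z) {w : ℝ → ℝ} (hw : IsDecaySolution φ p w) {t : ℝ}
    (ht : 0 ≤ t) : travelTime φ p (w t) = t := by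
  obtain ⟨hmem, hw₀, hderiv⟩ := hw
  have hcomp : ∀ s, 0 ≤ s → HasDerivWithinAt (travelTime φ p ∘ w) 1 (Ici 0) s := fun s hs => by
    have := (hasDerivWithinAt_travelTime hφ hpos (hmem s hs)).comp s (hderiv s hs)
      fun x hx => hmem x hx
    rwa [neg_mul_neg, inv_mul_cancel₀ (hpos _ (hmem s hs)).ne'] at this
  refine eq_of_has_deriv_right_eq (f' := fun _ => 1)
    (fun s hs => (hcomp s hs.1).mono (Ici_subset_Ici.2 hs.1))
    (fun s _ => hasDerivWithinAt_id s _)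
    (fun s hs => (hcomp s hs.1).continuousWithinAt.mono fun x hx => hx.1) continuousOn_id
    (by simp [hw₀, travelTime_self]) t ⟨ht, le_rfl⟩

theorem decaySolution_zero (hp : 0 < p) (hbij : BijOn (travelTime φ p) (Ioc 0 p) (Ici 0)) :
    decaySolution φ p 0 = p :=
  calc decaySolution φ p 0 = decaySolution φ p (travelTime φ p p) := by rw [travelTime_self]
    _ = p := (invOn_decaySolution hbij).1 ⟨hp, le_rfl⟩

theorem strictAntiOn_decaySolution (hφ : ContinuousOn φ (Ioc 0 p))
    (hpos : ∀ z ∈ Ioc 0 p, 0 < φ z) (hbij : BijOn (travelTime φ p) (Ioc 0 p) (Ici 0)) :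
    StrictAntiOn (decaySolution φ p) (Ici 0) := by
  intro s hs t ht hst
  have hv := mapsTo_decaySolution hbij
  refine ((strictAntiOn_travelTime hφ hpos).lt_iff_gt (hv hs) (hv ht)).1 ?_
  rwa [(invOn_decaySolution hbij).2 hs, (invOn_decaySolution hbij).2 ht]

theorem tendsto_decaySolution_atTop (hφ : ContinuousOn φ (Ioc 0 p))
    (hpos : ∀ z ∈ Ioc 0 p, 0 < φ z) (hp : 0 < p)
    (hbij : BijOn (travelTime φ p) (Ioc 0 p) (Ici 0)) :
    Tendsto (decaySolution φ p) atTop (𝓝 0) := by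
  have hv := mapsTo_decaySolution hbij
  refine tendsto_order.2 ⟨fun a ha => ?_, fun a ha => ?_⟩
  · filter_upwards [eventually_ge_atTop 0] with t ht using ha.trans (hv ht).1
  · set z := min (a / 2) p
    have hz : z ∈ Ioc 0 p := ⟨lt_min (half_pos ha) hp, min_le_right _ _⟩
    have hFz : travelTime φ p z ∈ Ici 0 := hbij.mapsTo hz
    filter_upwards [eventually_ge_atTop (travelTime φ p z)] with t ht
    calc decaySolution φ p t ≤ decaySolution φ p (travelTime φ p z) :=
          (strictAntiOn_decaySolution hφ hpos hbij).antitoneOn hFz (hFz.trans ht) ht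
      _ = z := (invOn_decaySolution hbij).1 hz
      _ < a := (min_le_left _ _).trans_lt (half_lt_self ha)

theorem lipschitzOnWith_decaySolution (hφ : ContinuousOn φ (Ioc 0 p))
    (hpos : ∀ z ∈ Ioc 0 p, 0 < φ z) (hbij : BijOn (travelTime φ p) (Ioc 0 p) (Ici 0))
    {M : NNReal} (hM : ∀ z ∈ Ioc 0 p, φ z ≤ M) :
    LipschitzOnWith M (decaySolution φ p) (Ici 0) := by
  have hv := mapsTo_decaySolution hbij
  refine LipschitzOnWith.of_dist_le_mul fun s hs t ht => ?_
  wlog hst : s ≤ t generalizing s t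
  · rw [dist_comm, dist_comm s]; exact this t ht s hs (le_of_not_ge hst)
  have hle : decaySolution φ p t ≤ decaySolution φ p s :=
    (strictAntiOn_decaySolution hφ hpos hbij).antitoneOn hs ht hst
  rw [Real.dist_eq, Real.dist_eq, abs_of_nonneg (sub_nonneg.2 hle), abs_sub_comm,
    abs_of_nonneg (sub_nonneg.2 hst)]
  calc decaySolution φ p s - decaySolution φ p t
      ≤ M * (travelTime φ p (decaySolution φ p t) - travelTime φ p (decaySolution φ p s)) :=
        sub_le_mul_travelTime_sub hφ hpos hM (hv ht).1 hle (hv hs).2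
    _ = M * (t - s) := by
      rw [(invOn_decaySolution hbij).2 hs, (invOn_decaySolution hbij).2 ht]

theorem hasDerivWithinAt_decaySolution (hφ : ContinuousOn φ (Ioc 0 p))
    (hpos : ∀ z ∈ Ioc 0 p, 0 < φ z) (hbij : BijOn (travelTime φ p) (Ioc 0 p) (Ici 0))
    {M : NNReal} (hM : ∀ z ∈ Ioc 0 p, φ z ≤ M) {t : ℝ} (ht : 0 ≤ t) :
    HasDerivWithinAt (decaySolution φ p) (-(φ (decaySolution φ p t))) (Ici 0) t := by
  have hv := mapsTo_decaySolution hbij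
  have := (hasDerivWithinAt_travelTime hφ hpos (hv ht)).of_local_left_inverse
    (((lipschitzOnWith_decaySolution hφ hpos hbij hM).continuousOn t ht).tendsto_nhdsWithin hv)
    (neg_ne_zero.2 (inv_ne_zero (hpos _ (hv ht)).ne')) ht
    (eventually_nhdsWithin_of_forall fun s hs => (invOn_decaySolution hbij).2 hs)
  rwa [inv_neg, inv_inv] at this

theorem isDecaySolution_decaySolution (hφ : ContinuousOn φ (Ioc 0 p))
    (hpos : ∀ z ∈ Ioc 0 p, 0 < φ z) (hp : 0 < p)
    (hbij : BijOn (travelTime φ p) (Ioc 0 p) (Ici 0)) {M : NNReal}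
    (hM : ∀ z ∈ Ioc 0 p, φ z ≤ M) : IsDecaySolution φ p (decaySolution φ p) :=
  ⟨fun _ ht => mapsTo_decaySolution hbij ht, decaySolution_zero hp hbij,
    fun _ ht => hasDerivWithinAt_decaySolution hφ hpos hbij hM ht⟩

theorem IsDecaySolution.eq_decaySolution (hφ : ContinuousOn φ (Ioc 0 p))
    (hpos : ∀ z ∈ Ioc 0 p, 0 < φ z) (hbij : BijOn (travelTime φ p) (Ioc 0 p) (Ici 0))
    {w : ℝ → ℝ} (hw : IsDecaySolution φ p w) {t : ℝ} (ht : 0 ≤ t) :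
    w t = decaySolution φ p t :=
  calc w t = decaySolution φ p (travelTime φ p (w t)) :=
        ((invOn_decaySolution hbij).1 (hw.1 t ht)).symm
    _ = decaySolution φ p t := by rw [hw.travelTime_eq hφ hpos ht]

theorem eqOn_abs_deriv_smul_decaySolution (hpos : ∀ z ∈ Ioc 0 p, 0 < φ z)
    (hbij : BijOn (travelTime φ p) (Ioc 0 p) (Ici 0)) :
    EqOn (fun z => |-(φ z)⁻¹| • decaySolution φ p (travelTime φ p z)) (fun z => z / φ z)
      (Ioc 0 p) := fun z hz => by
  simp only [(invOn_decaySolution hbij).1 hz, abs_neg, abs_inv, abs_of_pos (hpos z hz),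
    smul_eq_mul, div_eq_inv_mul]

theorem integrableOn_decaySolution_iff (hφ : ContinuousOn φ (Ioc 0 p))
    (hpos : ∀ z ∈ Ioc 0 p, 0 < φ z) (hbij : BijOn (travelTime φ p) (Ioc 0 p) (Ici 0)) :
    IntegrableOn (decaySolution φ p) (Ici 0) ↔ IntegrableOn (fun z => z / φ z) (Ioc 0 p) := by
  rw [← hbij.image_eq, integrableOn_image_iff_integrableOn_abs_deriv_smul measurableSet_Ioc
    (fun z hz => hasDerivWithinAt_travelTime hφ hpos hz) hbij.injOn]
  exact integrableOn_congr_fun (eqOn_abs_deriv_smul_decaySolution hpos hbij) measurableSet_Ioc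

theorem setIntegral_decaySolution (hφ : ContinuousOn φ (Ioc 0 p))
    (hpos : ∀ z ∈ Ioc 0 p, 0 < φ z) (hbij : BijOn (travelTime φ p) (Ioc 0 p) (Ici 0)) :
    ∫ t in Ici 0, decaySolution φ p t = ∫ z in Ioc 0 p, z / φ z := by
  rw [← hbij.image_eq, integral_image_eq_integral_abs_deriv_smul measurableSet_Ioc
    (fun z hz => hasDerivWithinAt_travelTime hφ hpos hz) hbij.injOn]
  exact setIntegral_congr_fun measurableSet_Ioc (eqOn_abs_deriv_smul_decaySolution hpos hbij)

end decaySolution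

theorem stmt_17_general (p b : ℝ) (hp : 0 < p) (hb : 0 < b) (φ : ℝ → ℝ)
    (hlip : LocallyLipschitzOn (Set.Icc 0 p) φ)
    (hpos : ∀ z ∈ Set.Ioc (0:ℝ) p, 0 < φ z)
    (hlim : Filter.Tendsto (fun z => φ z / z) (nhdsWithin 0 (Set.Ioi 0)) (nhds b)) :
    ∃ v : ℝ → ℝ,
      ((∀ t : ℝ, 0 ≤ t → v t ∈ Set.Ioc 0 p) ∧ v 0 = p ∧
        (∀ t : ℝ, 0 ≤ t → HasDerivWithinAt v (-(φ (v t))) (Set.Ici 0) t)) ∧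
      StrictAntiOn v (Set.Ici 0) ∧
      Filter.Tendsto v Filter.atTop (nhds 0) ∧
      MeasureTheory.IntegrableOn (fun z => z / φ z) (Set.Ioc 0 p) ∧
      MeasureTheory.IntegrableOn v (Set.Ici 0) ∧
      (∫ t in Set.Ici (0:ℝ), v t) = ∫ z in Set.Ioc (0:ℝ) p, z / φ z ∧
      (∀ w : ℝ → ℝ,
        ((∀ t : ℝ, 0 ≤ t → w t ∈ Set.Ioc 0 p) ∧ w 0 = p ∧
          (∀ t : ℝ, 0 ≤ t → HasDerivWithinAt w (-(φ (w t))) (Set.Ici 0) t)) →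
        ∀ t : ℝ, 0 ≤ t → w t = v t) := by
  have hφ : ContinuousOn φ (Icc 0 p) := hlip.continuousOn
  have hφ' : ContinuousOn φ (Ioc 0 p) := hφ.mono Ioc_subset_Icc_self
  have hbij := bijOn_travelTime hφ' hpos hp hlim
  obtain ⟨C, hC⟩ := isCompact_Icc.bddAbove_image hφ
  have hM : ∀ z ∈ Ioc 0 p, φ z ≤ C.toNNReal := fun z hz =>
    (hC (mem_image_of_mem φ (Ioc_subset_Icc_self hz))).trans (Real.le_coe_toNNReal C)
  have hint : IntegrableOn (fun z => z / φ z) (Ioc 0 p) :=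
    integrableOn_Ioc_of_continuousOn_of_tendsto
      (continuousOn_id.div hφ' fun z hz => (hpos z hz).ne')
      (by simpa only [inv_div] using hlim.inv₀ hb.ne')
  exact ⟨decaySolution φ p, isDecaySolution_decaySolution hφ' hpos hp hbij hM,
    strictAntiOn_decaySolution hφ' hpos hbij, tendsto_decaySolution_atTop hφ' hpos hp hbij,
    hint, (integrableOn_decaySolution_iff hφ' hpos hbij).2 hint,
    setIntegral_decaySolution hφ' hpos hbij,
    fun w hw _ ht => IsDecaySolution.eq_decaySolution hφ' hpos hbij hw ht⟩

/-- Deterministic core of the ergodicity result for a strictly subcritical CBI process. -/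
theorem stmt_17 (p b : ℝ) (hp : 0 < p) (hb : 0 < b) (φ : ℝ → ℝ)
    (hlip : LocallyLipschitzOn (Set.Icc 0 p) φ)
    (hφ0 : φ 0 = 0)
    (hpos : ∀ z ∈ Set.Ioc (0:ℝ) p, 0 < φ z)
    (hlim : Filter.Tendsto (fun z => φ z / z) (nhdsWithin 0 (Set.Ioi 0)) (nhds b)) :
    ∃ v : ℝ → ℝ,
      ((∀ t : ℝ, 0 ≤ t → v t ∈ Set.Ioc 0 p) ∧ v 0 = p ∧
        (∀ t : ℝ, 0 ≤ t → HasDerivWithinAt v (-(φ (v t))) (Set.Ici 0) t)) ∧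
      StrictAntiOn v (Set.Ici 0) ∧
      Filter.Tendsto v Filter.atTop (nhds 0) ∧
      MeasureTheory.IntegrableOn (fun z => z / φ z) (Set.Ioc 0 p) ∧
      MeasureTheory.IntegrableOn v (Set.Ici 0) ∧
      (∫ t in Set.Ici (0:ℝ), v t) = ∫ z in Set.Ioc (0:ℝ) p, z / φ z ∧
      (∀ w : ℝ → ℝ,
        ((∀ t : ℝ, 0 ≤ t → w t ∈ Set.Ioc 0 p) ∧ w 0 = p ∧
          (∀ t : ℝ, 0 ≤ t → HasDerivWithinAt w (-(φ (w t))) (Set.Ici 0) t)) →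
        ∀ t : ℝ, 0 ≤ t → w t = v t) :=
  stmt_17_general p b hp hb φ hlip hpos hlim
end
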